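/- (Theorem 2: the conventional CFL limit is at most the generalized CFL limit.) For the concrete 3-D FDTD-Q region, every eigenvalue μ ∈ spectrum ℝ Σ satisfies |μ| ≤ (2*ℏ/m) * (1/Δx^2 + 1/Δy^2 + 1/Δz^2) + (1/ℏ) * (max over p ∈ 𝒩 of |U p|). Equivalently, Δt_CFL := 2/((2*ℏ/m)*(1/Δx^2+1/Δy^2+1/Δz^2) + (max over p ∈ 𝒩 of |U p|)/ℏ) is at most the generalized CFL limit Δt_CFL,gen := 2/ρ(Σ), where ρ(Σ) is the maximum of |μ| over eigenvalues μ of Σ. -/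

import Mathlib

/-!
A direct Gershgorin bound on `Σ` fails: the row sums of `Ĩ^{-1/2} A Ĩ^{-1/2}` exceed `4` near the
boundary. Instead conjugate by `D`: `Σ` is similar to `ℏ⁻¹ D² H = ℏ⁻¹ V''⁻¹ H`, so every eigenvalue
is bounded by the `ℓ∞` operator norm (maximal absolute row sum) of that matrix. Since
`V''⁻¹ = (Δx Δy Δz)⁻¹ (Ĩ⁻¹ ⊗ Ĩ⁻¹ ⊗ Ĩ⁻¹)`, the mixed-product rule turns the kinetic part into
`(ℏ²/2m) (Δx⁻² (1 ⊗ 1 ⊗ Ĩ⁻¹A) + …)` and the potential part into `diag U`. Finally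
`Ĩ⁻¹ A = (Ĩ⁻¹ Wᵀ) W` has norm at most `2 · 2`: each row of `W` holds one `-1` and one `+1`, and
each node lies on one edge (at the ends, where `Ĩ = 1/2`) or two edges (inside, where `Ĩ = 1`).
-/

open Matrix Kronecker

noncomputable section

abbrev Node (nx ny nz : ℕ) := Fin (nz+1) × Fin (ny+1) × Fin (nx+1)

/-- Triple Kronecker product with indices identified with `α × β × γ`. -/
def kron3 {α β γ : Type*} (A : Matrix α α ℝ) (B : Matrix β β ℝ) (C : Matrix γ γ ℝ) :
    Matrix (α × β × γ) (α × β × γ) ℝ :=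
  Matrix.reindex (Equiv.prodAssoc α β γ) (Equiv.prodAssoc α β γ) (A ⊗ₖ B ⊗ₖ C)

/-- 1-D finite-difference matrix `W p`: `-1` at `j = castSucc i`, `+1` at `j = succ i`. -/
def Wmat (p : ℕ) : Matrix (Fin p) (Fin (p+1)) ℝ :=
  Matrix.of fun i j => if j = Fin.castSucc i then (-1 : ℝ) else if j = Fin.succ i then 1 else 0

/-- 1-D stiffness matrix `A p = (W p)ᵀ * W p`. -/
def Amat (p : ℕ) : Matrix (Fin (p+1)) (Fin (p+1)) ℝ := (Wmat p)ᵀ * Wmat p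

/-- Diagonal matrix with first and last entries `1/2`, all others `1`. -/
def Itl (p : ℕ) : Matrix (Fin (p+1)) (Fin (p+1)) ℝ :=
  Matrix.diagonal (fun i => if i = 0 ∨ i = Fin.last p then (1:ℝ)/2 else 1)

/-- Secondary-cell volume matrix `V''`. -/
def Vsec (nx ny nz : ℕ) (Δx Δy Δz : ℝ) : Matrix (Node nx ny nz) (Node nx ny nz) ℝ :=
  Matrix.diagonal (fun p =>
    Δx * Δy * Δz * Itl nz p.1 p.1 * Itl ny p.2.1 p.2.1 * Itl nx p.2.2 p.2.2)

/-- The FDTD-Q Hamiltonian matrix `H`. -/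
def Hmat (nx ny nz : ℕ) (ℏ m Δx Δy Δz : ℝ) (U : Node nx ny nz → ℝ) :
    Matrix (Node nx ny nz) (Node nx ny nz) ℝ :=
  (ℏ^2/(2*m)) • ((Δy*Δz/Δx) • kron3 (Itl nz) (Itl ny) (Amat nx)
    + (Δx*Δz/Δy) • kron3 (Itl nz) (Amat ny) (Itl nx)
    + (Δx*Δy/Δz) • kron3 (Amat nz) (Itl ny) (Itl nx))
  + Vsec nx ny nz Δx Δy Δz * Matrix.diagonal U

/-- Diagonal matrix of reciprocal square roots of the diagonal of `V''`. -/
def Dmat (nx ny nz : ℕ) (Δx Δy Δz : ℝ) : Matrix (Node nx ny nz) (Node nx ny nz) ℝ :=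
  Matrix.diagonal (fun p => 1 / Real.sqrt (Vsec nx ny nz Δx Δy Δz p p))

/-- The scaled Hamiltonian `Σ = (1/ℏ) • (D * H * D)`. -/
def Sgm (nx ny nz : ℕ) (ℏ m Δx Δy Δz : ℝ) (U : Node nx ny nz → ℝ) :
    Matrix (Node nx ny nz) (Node nx ny nz) ℝ :=
  (1/ℏ) • (Dmat nx ny nz Δx Δy Δz * Hmat nx ny nz ℏ m Δx Δy Δz U * Dmat nx ny nz Δx Δy Δz)

attribute [local instance] Matrix.linftyOpNormedAddCommGroup Matrix.linftyOpNormedRing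
  Matrix.linftyOpNormedAlgebra

namespace Matrix

variable {l m n p : Type*} [Fintype l] [Fintype m] [Fintype n] [Fintype p]

theorem sum_abs_le_linfty_opNorm (A : Matrix l m ℝ) (i : l) : ∑ j, |A i j| ≤ ‖A‖ := by
  rw [linfty_opNorm_def]
  simpa [Real.norm_eq_abs] using
    NNReal.coe_le_coe.mpr (Finset.le_sup (f := fun i => ∑ j, ‖A i j‖₊) (Finset.mem_univ i))

theorem linfty_opNorm_le_of_forall_sum_le {A : Matrix l m ℝ} {C : ℝ} (hC : 0 ≤ C)
    (h : ∀ i, ∑ j, |A i j| ≤ C) : ‖A‖ ≤ C := by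
  rw [linfty_opNorm_def, ← NNReal.coe_mk C hC, NNReal.coe_le_coe, Finset.sup_le_iff]
  intro i _
  rw [← NNReal.coe_le_coe]
  simpa [Real.norm_eq_abs] using h i

theorem linfty_opNorm_kronecker_le (A : Matrix l m ℝ) (B : Matrix n p ℝ) :
    ‖A ⊗ₖ B‖ ≤ ‖A‖ * ‖B‖ := by
  refine linfty_opNorm_le_of_forall_sum_le (by positivity) fun ik => ?_
  simp only [Fintype.sum_prod_type, kroneckerMap_apply, abs_mul, ← Finset.sum_mul_sum]
  exact mul_le_mul (sum_abs_le_linfty_opNorm A ik.1) (sum_abs_le_linfty_opNorm B ik.2)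
    (Finset.sum_nonneg fun _ _ => abs_nonneg _) (norm_nonneg _)

theorem linfty_opNorm_reindex_le (e₁ : l ≃ n) (e₂ : m ≃ p) (A : Matrix l m ℝ) :
    ‖reindex e₁ e₂ A‖ ≤ ‖A‖ :=
  linfty_opNorm_le_of_forall_sum_le (norm_nonneg _) fun i =>
    (e₂.symm.sum_comp fun j => |A (e₁.symm i) j|).trans_le (sum_abs_le_linfty_opNorm A _)

theorem linfty_opNorm_diagonal_le_sup'_abs [DecidableEq l] [Nonempty l] (U : l → ℝ) :
    ‖diagonal U‖ ≤ Finset.univ.sup' Finset.univ_nonempty (fun q => |U q|) := by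
  rw [linfty_opNorm_diagonal]
  have hle (q : l) : |U q| ≤ Finset.univ.sup' Finset.univ_nonempty (fun q => |U q|) :=
    Finset.le_sup' (fun q => |U q|) (Finset.mem_univ q)
  exact (pi_norm_le_iff_of_nonneg ((abs_nonneg _).trans (hle (Classical.arbitrary l)))).2 hle

end Matrix

section Kron3

variable {α β γ : Type*}

theorem kron3_diagonal [DecidableEq α] [DecidableEq β] [DecidableEq γ]
    (a : α → ℝ) (b : β → ℝ) (c : γ → ℝ) :
    kron3 (diagonal a) (diagonal b) (diagonal c)
      = diagonal fun p => a p.1 * b p.2.1 * c p.2.2 := by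
  simp only [kron3, diagonal_kronecker_diagonal, reindex_apply, submatrix_diagonal_equiv]
  rfl

variable [Fintype α] [Fintype β] [Fintype γ]

theorem kron3_mul_kron3 (A A' : Matrix α α ℝ) (B B' : Matrix β β ℝ) (C C' : Matrix γ γ ℝ) :
    kron3 A B C * kron3 A' B' C' = kron3 (A * A') (B * B') (C * C') := by
  simp only [kron3, reindex_apply, submatrix_mul_equiv, mul_kronecker_mul]

theorem linfty_opNorm_kron3_le (A : Matrix α α ℝ) (B : Matrix β β ℝ) (C : Matrix γ γ ℝ) :
    ‖kron3 A B C‖ ≤ ‖A‖ * ‖B‖ * ‖C‖ :=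
  calc ‖kron3 A B C‖ ≤ ‖A ⊗ₖ B ⊗ₖ C‖ := linfty_opNorm_reindex_le _ _ _
    _ ≤ ‖A ⊗ₖ B‖ * ‖C‖ := linfty_opNorm_kronecker_le _ _
    _ ≤ ‖A‖ * ‖B‖ * ‖C‖ := by gcongr; exact linfty_opNorm_kronecker_le _ _

end Kron3

def itlDiag (p : ℕ) (i : Fin (p+1)) : ℝ := if i = 0 ∨ i = Fin.last p then 1/2 else 1

theorem Itl_eq_diagonal (p : ℕ) : Itl p = diagonal (itlDiag p) := rfl

theorem itlDiag_pos (p : ℕ) (i : Fin (p+1)) : 0 < itlDiag p i := by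
  unfold itlDiag; split_ifs <;> norm_num

theorem abs_Wmat_apply (p : ℕ) (r : Fin p) (j : Fin (p+1)) :
    |Wmat p r j| = (if j = r.castSucc then 1 else 0) + (if j = r.succ then 1 else 0) := by
  have := (Fin.castSucc_lt_succ (i := r)).ne
  simp only [Wmat, of_apply]
  split_ifs <;> simp_all [one_add_one_eq_two]

theorem linfty_opNorm_Wmat_le (p : ℕ) : ‖Wmat p‖ ≤ 2 :=
  linfty_opNorm_le_of_forall_sum_le zero_le_two fun r => by
    simp only [abs_Wmat_apply, Finset.sum_add_distrib, Finset.sum_ite_eq', Finset.mem_univ,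
      if_true]
    norm_num

theorem sum_abs_Wmat_apply_le (p : ℕ) (i : Fin (p+1)) :
    ∑ r, |Wmat p r i| ≤ 2 * itlDiag p i := by
  have hcast := Fin.sum_univ_castSucc fun j : Fin (p+1) => if i = j then (1 : ℝ) else 0
  have hsucc := Fin.sum_univ_succ fun j : Fin (p+1) => if i = j then (1 : ℝ) else 0
  simp only [Finset.sum_ite_eq, Finset.mem_univ, if_true] at hcast hsucc
  simp only [abs_Wmat_apply, Finset.sum_add_distrib]
  rw [eq_sub_of_add_eq hcast.symm, eq_sub_of_add_eq' hsucc.symm, itlDiag]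
  clear hcast hsucc
  split_ifs <;> simp_all [one_add_one_eq_two]

theorem linfty_opNorm_itlInv_mul_Amat_le (p : ℕ) :
    ‖diagonal (itlDiag p)⁻¹ * Amat p‖ ≤ 4 := by
  have hWt : ‖diagonal (itlDiag p)⁻¹ * (Wmat p)ᵀ‖ ≤ 2 :=
    linfty_opNorm_le_of_forall_sum_le zero_le_two fun i => by
      have hi := itlDiag_pos p i
      simp only [diagonal_mul, transpose_apply, Pi.inv_apply, abs_mul, abs_inv, abs_of_pos hi,
        ← Finset.mul_sum]
      rw [inv_mul_le_iff₀ hi, mul_comm]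
      exact sum_abs_Wmat_apply_le p i
  calc ‖diagonal (itlDiag p)⁻¹ * Amat p‖
      = ‖diagonal (itlDiag p)⁻¹ * (Wmat p)ᵀ * Wmat p‖ := by rw [Amat, Matrix.mul_assoc]
    _ ≤ ‖diagonal (itlDiag p)⁻¹ * (Wmat p)ᵀ‖ * ‖Wmat p‖ := linfty_opNorm_mul _ _
    _ ≤ 2 * 2 := by gcongr; exact linfty_opNorm_Wmat_le p
    _ = 4 := by norm_num

theorem itlInv_mul_Itl (p : ℕ) : diagonal (itlDiag p)⁻¹ * Itl p = 1 := by
  rw [Itl_eq_diagonal, diagonal_mul_diagonal, ← diagonal_one]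
  exact congrArg diagonal (funext fun i => inv_mul_cancel₀ (itlDiag_pos p i).ne')

section FDTDQ

variable {nx ny nz : ℕ} {Δx Δy Δz : ℝ}

theorem Vsec_apply_self (q : Node nx ny nz) : Vsec nx ny nz Δx Δy Δz q q
    = Δx * Δy * Δz * (itlDiag nz q.1 * itlDiag ny q.2.1 * itlDiag nx q.2.2) := by
  simp only [Vsec, Itl_eq_diagonal, diagonal_apply_eq]
  ring

theorem Vsec_eq_diagonal :
    Vsec nx ny nz Δx Δy Δz = diagonal fun q => Vsec nx ny nz Δx Δy Δz q q := by
  simp only [Vsec, diagonal_apply_eq]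

variable (hΔx : 0 < Δx) (hΔy : 0 < Δy) (hΔz : 0 < Δz)
include hΔx hΔy hΔz

theorem Vsec_apply_self_pos (q : Node nx ny nz) : 0 < Vsec nx ny nz Δx Δy Δz q q := by
  have := itlDiag_pos nz q.1; have := itlDiag_pos ny q.2.1; have := itlDiag_pos nx q.2.2
  rw [Vsec_apply_self]
  positivity

theorem Dmat_mul_Dmat :
    Dmat nx ny nz Δx Δy Δz * Dmat nx ny nz Δx Δy Δz
      = diagonal fun q => (Vsec nx ny nz Δx Δy Δz q q)⁻¹ := by
  rw [Dmat, diagonal_mul_diagonal]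
  congr 1
  funext q
  rw [one_div_mul_one_div, Real.mul_self_sqrt (Vsec_apply_self_pos hΔx hΔy hΔz q).le, one_div]

theorem Dmat_mul_Dmat_mul_Vsec :
    Dmat nx ny nz Δx Δy Δz * Dmat nx ny nz Δx Δy Δz * Vsec nx ny nz Δx Δy Δz = 1 := by
  rw [Vsec_eq_diagonal, Dmat_mul_Dmat hΔx hΔy hΔz, diagonal_mul_diagonal, ← diagonal_one]
  congr 1
  funext q
  exact inv_mul_cancel₀ (Vsec_apply_self_pos hΔx hΔy hΔz q).ne'

theorem Dmat_mul_Dmat_eq_smul_kron3 :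
    Dmat nx ny nz Δx Δy Δz * Dmat nx ny nz Δx Δy Δz = (Δx * Δy * Δz)⁻¹ •
      kron3 (diagonal (itlDiag nz)⁻¹) (diagonal (itlDiag ny)⁻¹) (diagonal (itlDiag nx)⁻¹) := by
  rw [Dmat_mul_Dmat hΔx hΔy hΔz, kron3_diagonal, ← diagonal_smul]
  congr 1
  funext q
  simp only [Vsec_apply_self, Pi.smul_apply, Pi.inv_apply, smul_eq_mul, mul_inv]

theorem spectrum_Sgm (ℏ m : ℝ) (U : Node nx ny nz → ℝ) :
    spectrum ℝ (Sgm nx ny nz ℏ m Δx Δy Δz U) = spectrum ℝ ((1/ℏ) •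
      (Dmat nx ny nz Δx Δy Δz * Dmat nx ny nz Δx Δy Δz * Hmat nx ny nz ℏ m Δx Δy Δz U)) := by
  have hsqrt : ∀ q, Real.sqrt (Vsec nx ny nz Δx Δy Δz q q) ≠ 0 := fun q =>
    Real.sqrt_ne_zero'.2 (Vsec_apply_self_pos hΔx hΔy hΔz q)
  set S := diagonal fun q => Real.sqrt (Vsec nx ny nz Δx Δy Δz q q)
  have hD_mul_sqrt : Dmat nx ny nz Δx Δy Δz * S = 1 := by
    rw [Dmat, diagonal_mul_diagonal, ← diagonal_one]
    exact congrArg diagonal (funext fun q => one_div_mul_cancel (hsqrt q))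
  have hsqrt_mul_D : S * Dmat nx ny nz Δx Δy Δz = 1 := by
    rw [Dmat, diagonal_mul_diagonal, ← diagonal_one]
    exact congrArg diagonal (funext fun q => mul_one_div_cancel (hsqrt q))
  rw [← spectrum.units_conjugate (u := ⟨_, _, hD_mul_sqrt, hsqrt_mul_D⟩)]
  simp only [Sgm, Units.inv_mk, Matrix.mul_smul, Matrix.smul_mul, Matrix.mul_assoc, hD_mul_sqrt,
    Matrix.mul_one]

theorem linfty_opNorm_Dmat_mul_Dmat_mul_kron3_le (X : Matrix (Fin (nz+1)) (Fin (nz+1)) ℝ)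
    (Y : Matrix (Fin (ny+1)) (Fin (ny+1)) ℝ) (Z : Matrix (Fin (nx+1)) (Fin (nx+1)) ℝ) :
    ‖Dmat nx ny nz Δx Δy Δz * Dmat nx ny nz Δx Δy Δz * kron3 X Y Z‖
      ≤ (Δx * Δy * Δz)⁻¹ * (‖diagonal (itlDiag nz)⁻¹ * X‖ * ‖diagonal (itlDiag ny)⁻¹ * Y‖
        * ‖diagonal (itlDiag nx)⁻¹ * Z‖) := by
  rw [Dmat_mul_Dmat_eq_smul_kron3 hΔx hΔy hΔz, Matrix.smul_mul, kron3_mul_kron3,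
    norm_smul_of_nonneg (by positivity)]
  gcongr
  exact linfty_opNorm_kron3_le _ _ _

theorem linfty_opNorm_Dmat_mul_Dmat_mul_Hmat_le {ℏ m : ℝ} (hm : 0 < m)
    (U : Node nx ny nz → ℝ) :
    ‖Dmat nx ny nz Δx Δy Δz * Dmat nx ny nz Δx Δy Δz * Hmat nx ny nz ℏ m Δx Δy Δz U‖
      ≤ ℏ^2/(2*m) * (4/Δx^2 + 4/Δy^2 + 4/Δz^2)
        + Finset.univ.sup' Finset.univ_nonempty (fun q => |U q|) := by
  set D := Dmat nx ny nz Δx Δy Δz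
  have hI (p : ℕ) : ‖diagonal (itlDiag p)⁻¹ * Itl p‖ = 1 := by rw [itlInv_mul_Itl, norm_one]
  have hA := linfty_opNorm_itlInv_mul_Amat_le
  have hK := linfty_opNorm_Dmat_mul_Dmat_mul_kron3_le (nx := nx) (ny := ny) (nz := nz) hΔx hΔy hΔz
  have hK₁ : ‖D * D * kron3 (Itl nz) (Itl ny) (Amat nx)‖ ≤ (Δx * Δy * Δz)⁻¹ * 4 :=
    (hK _ _ _).trans (by simp only [hI, one_mul]; gcongr; exact hA _)
  have hK₂ : ‖D * D * kron3 (Itl nz) (Amat ny) (Itl nx)‖ ≤ (Δx * Δy * Δz)⁻¹ * 4 :=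
    (hK _ _ _).trans (by simp only [hI, one_mul, mul_one]; gcongr; exact hA _)
  have hK₃ : ‖D * D * kron3 (Amat nz) (Itl ny) (Itl nx)‖ ≤ (Δx * Δy * Δz)⁻¹ * 4 :=
    (hK _ _ _).trans (by simp only [hI, mul_one]; gcongr; exact hA _)
  rw [Hmat, Matrix.mul_add, ← Matrix.mul_assoc _ (Vsec nx ny nz Δx Δy Δz),
    Dmat_mul_Dmat_mul_Vsec hΔx hΔy hΔz, Matrix.one_mul]
  simp only [Matrix.mul_add, Matrix.mul_smul]
  calc _ ≤ ℏ^2/(2*m) * ((Δy*Δz/Δx) * ‖D * D * kron3 (Itl nz) (Itl ny) (Amat nx)‖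
          + (Δx*Δz/Δy) * ‖D * D * kron3 (Itl nz) (Amat ny) (Itl nx)‖
          + (Δx*Δy/Δz) * ‖D * D * kron3 (Amat nz) (Itl ny) (Itl nx)‖) + ‖diagonal U‖ := by
        refine (norm_add_le _ _).trans ?_
        rw [norm_smul_of_nonneg (by positivity)]
        gcongr
        refine norm_add₃_le.trans_eq ?_
        simp (disch := positivity) only [norm_smul_of_nonneg]
    _ ≤ ℏ^2/(2*m) * ((Δy*Δz/Δx) * ((Δx * Δy * Δz)⁻¹ * 4) + (Δx*Δz/Δy) * ((Δx * Δy * Δz)⁻¹ * 4)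
          + (Δx*Δy/Δz) * ((Δx * Δy * Δz)⁻¹ * 4))
          + Finset.univ.sup' Finset.univ_nonempty (fun q => |U q|) := by
        gcongr
        exact linfty_opNorm_diagonal_le_sup'_abs U
    _ = _ := by field_simp

end FDTDQ

theorem fdtdq_conventional_CFL_le_generalized_CFL
    (nx ny nz : ℕ)
    (ℏ m Δx Δy Δz : ℝ) (hℏ : 0 < ℏ) (hm : 0 < m)
    (hΔx : 0 < Δx) (hΔy : 0 < Δy) (hΔz : 0 < Δz)
    (U : Node nx ny nz → ℝ) :
    ∀ μ ∈ spectrum ℝ (Sgm nx ny nz ℏ m Δx Δy Δz U),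
      |μ| ≤ (2*ℏ/m) * (1/Δx^2 + 1/Δy^2 + 1/Δz^2)
        + (1/ℏ) * (Finset.univ.sup' Finset.univ_nonempty (fun p : Node nx ny nz => |U p|)) := by
  intro μ hμ
  rw [spectrum_Sgm hΔx hΔy hΔz] at hμ
  calc |μ| ≤ ‖(1/ℏ) • (Dmat nx ny nz Δx Δy Δz * Dmat nx ny nz Δx Δy Δz
          * Hmat nx ny nz ℏ m Δx Δy Δz U)‖ := spectrum.norm_le_norm_of_mem hμ
    _ = 1/ℏ * ‖Dmat nx ny nz Δx Δy Δz * Dmat nx ny nz Δx Δy Δz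
          * Hmat nx ny nz ℏ m Δx Δy Δz U‖ := norm_smul_of_nonneg (by positivity) _
    _ ≤ 1/ℏ * (ℏ^2/(2*m) * (4/Δx^2 + 4/Δy^2 + 4/Δz^2)
          + Finset.univ.sup' Finset.univ_nonempty (fun p => |U p|)) := by
        gcongr
        exact linfty_opNorm_Dmat_mul_Dmat_mul_Hmat_le hΔx hΔy hΔz hm U
    _ = _ := by field_simp; ring

end
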